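/- arXiv:0801.4218 — 4 statements merged into one kernel-verified Lean document; each statement's English description precedes it below -/
import Mathlib

section
/- For all vectors Z, W in H, one has M̂(N(Z ⊗ I) ⊗ N(W ⊗ I)) = 3(2g−2)(Z·W), where Z ⊗ I and W ⊗ I are regarded as elements of H^{⊗3}. -/
open TensorProduct

noncomputable section

/-- The intersection element `I = Σᵢ Xᵢ ⊗ X_{g+i} − X_{g+i} ⊗ Xᵢ ∈ H ⊗ H` associated to a
symplectic basis `X : Fin g ⊕ Fin g → H`. -/
def sympI {H : Type*} [AddCommGroup H] [Module ℂ H] {g : ℕ}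
    (X : Fin g ⊕ Fin g → H) : H ⊗[ℂ] H :=
  ∑ i : Fin g, (X (Sum.inl i) ⊗ₜ[ℂ] X (Sum.inr i) - X (Sum.inr i) ⊗ₜ[ℂ] X (Sum.inl i))

/-!
Expanding both cyclic symmetrizers, the nine pairings of `M̂` fall into three cyclic classes, so
the value is `3 ((Z·W)⟨I, I⟩ + L₁ + L₂)`, where in `L₁` and `L₂` the two copies of `I` link `Z`
to `W`. Because `I` is the inverse of the symplectic form,
`Σᵢ (Z·Xᵢ)(X_{g+i}·W) − (Z·X_{g+i})(Xᵢ·W) = −Z·W`, so `⟨I, I⟩ = 2g` and `L₁ = L₂ = −Z·W`.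
-/

open Finset

section SympSum

variable {R H ι : Type*} [CommRing R] [Fintype ι]

/-- For bilinear `f`, this is `f` evaluated on the intersection element `sympI X`. -/
def sympSum (X : ι ⊕ ι → H) (f : H → H → R) : R :=
  ∑ i, (f (X (Sum.inl i)) (X (Sum.inr i)) - f (X (Sum.inr i)) (X (Sum.inl i)))

variable (X : ι ⊕ ι → H)

@[simp]
theorem sympSum_add (f g : H → H → R) :
    sympSum X (fun a b => f a b + g a b) = sympSum X f + sympSum X g := by
  simp only [sympSum, ← sum_add_distrib]
  exact sum_congr rfl fun _ _ => by ring

@[simp]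
theorem sympSum_neg (f : H → H → R) : sympSum X (fun a b => -f a b) = -sympSum X f := by
  simp only [sympSum, ← sum_neg_distrib]
  exact sum_congr rfl fun _ _ => by ring

@[simp]
theorem sympSum_mul_left (c : R) (f : H → H → R) :
    sympSum X (fun a b => c * f a b) = c * sympSum X f := by
  simp only [sympSum, mul_sum, mul_sub]

@[simp]
theorem sympSum_mul_right (c : R) (f : H → H → R) :
    sympSum X (fun a b => f a b * c) = sympSum X f * c := by
  simp only [sympSum, sum_mul, sub_mul]

end SympSum

section SymplecticBasis

variable {R H ι : Type*} [CommRing R] [AddCommGroup H] [Module R H] [Fintype ι] [DecidableEq ι]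
  {m : H →ₗ[R] H →ₗ[R] R} (hm : m.IsAlt) {X : Module.Basis (ι ⊕ ι) R H}
  (hX1 : ∀ i j, m (X (Sum.inl i)) (X (Sum.inr j)) = if i = j then 1 else 0)
  (hX2 : ∀ i j, m (X (Sum.inl i)) (X (Sum.inl j)) = 0)
  (hX3 : ∀ i j, m (X (Sum.inr i)) (X (Sum.inr j)) = 0)
include hm hX1 hX2 hX3

theorem sympSum_apply_mul_apply (Z W : H) :
    sympSum X (fun a b => m Z a * m b W) = -m Z W := by
  have hX4 : ∀ i j, m (X (Sum.inr i)) (X (Sum.inl j)) = if j = i then -1 else 0 := by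
    intro i j
    rw [← hm.neg, hX1]
    split_ifs <;> simp
  have h : ∑ i, (m (X (Sum.inr i)) W • m.flip (X (Sum.inl i))
      - m (X (Sum.inl i)) W • m.flip (X (Sum.inr i))) = -m.flip W := by
    refine X.ext fun k => ?_
    rcases k with k | k <;> simp [hX1, hX2, hX3, hX4]
  simpa [sympSum, mul_comm] using LinearMap.congr_fun h Z

theorem sympSum_apply_mul_apply_flip (Z W : H) :
    sympSum X (fun a b => m Z a * m W b) = m Z W := by
  simp_rw [← hm.neg _ W, mul_neg, sympSum_neg, sympSum_apply_mul_apply hm hX1 hX2 hX3, neg_neg]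

theorem sympSum_flip_apply_mul_apply (Z W : H) :
    sympSum X (fun a b => m a Z * m b W) = m Z W := by
  simp_rw [← hm.neg Z, neg_mul, sympSum_neg, sympSum_apply_mul_apply hm hX1 hX2 hX3, neg_neg]

omit hX2 hX3 in
theorem sympSum_self : sympSum X (fun a b => m a b) = 2 * Fintype.card ι := by
  simp [sympSum, ← hm.neg (X (Sum.inl _)), hX1, mul_comm, sub_eq_add_neg, ← two_mul]

end SymplecticBasis

section CyclicSymmetrizer

variable {R H : Type*} [CommRing R] [AddCommGroup H] [Module R H] {m : H →ₗ[R] H →ₗ[R] R}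
  {Mhat : (H ⊗[R] (H ⊗[R] H)) ⊗[R] (H ⊗[R] (H ⊗[R] H)) →ₗ[R] R}
  (hMhat : ∀ Z1 Z2 Z3 W1 W2 W3 : H,
    Mhat ((Z1 ⊗ₜ[R] (Z2 ⊗ₜ[R] Z3)) ⊗ₜ[R] (W1 ⊗ₜ[R] (W2 ⊗ₜ[R] W3)))
      = m Z1 W1 * m Z2 W2 * m Z3 W3)
  {N : H ⊗[R] (H ⊗[R] H) →ₗ[R] H ⊗[R] (H ⊗[R] H)}
  (hN : ∀ Z1 Z2 Z3 : H, N (Z1 ⊗ₜ[R] (Z2 ⊗ₜ[R] Z3)) =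
    Z1 ⊗ₜ[R] (Z2 ⊗ₜ[R] Z3) + Z3 ⊗ₜ[R] (Z1 ⊗ₜ[R] Z2) + Z2 ⊗ₜ[R] (Z3 ⊗ₜ[R] Z1))
include hMhat hN

theorem mhat_cyclicSymm_tmul (Z W a b c d : H) :
    Mhat (N (Z ⊗ₜ[R] (a ⊗ₜ[R] b)) ⊗ₜ[R] N (W ⊗ₜ[R] (c ⊗ₜ[R] d))) =
      3 * (m Z W * (m a c * m b d) + m a W * m b c * m Z d + m Z c * (m a d * m b W)) := by
  simp only [hN, add_tmul, tmul_add, map_add, hMhat]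
  ring

end CyclicSymmetrizer

theorem mhat_cyclicSymm_sympI {H : Type*} [AddCommGroup H] [Module ℂ H] {m : H →ₗ[ℂ] H →ₗ[ℂ] ℂ}
    {Mhat : (H ⊗[ℂ] (H ⊗[ℂ] H)) ⊗[ℂ] (H ⊗[ℂ] (H ⊗[ℂ] H)) →ₗ[ℂ] ℂ}
    (hMhat : ∀ Z1 Z2 Z3 W1 W2 W3 : H,
      Mhat ((Z1 ⊗ₜ[ℂ] (Z2 ⊗ₜ[ℂ] Z3)) ⊗ₜ[ℂ] (W1 ⊗ₜ[ℂ] (W2 ⊗ₜ[ℂ] W3)))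
        = m Z1 W1 * m Z2 W2 * m Z3 W3)
    {N : H ⊗[ℂ] (H ⊗[ℂ] H) →ₗ[ℂ] H ⊗[ℂ] (H ⊗[ℂ] H)}
    (hN : ∀ Z1 Z2 Z3 : H, N (Z1 ⊗ₜ[ℂ] (Z2 ⊗ₜ[ℂ] Z3)) =
      Z1 ⊗ₜ[ℂ] (Z2 ⊗ₜ[ℂ] Z3) + Z3 ⊗ₜ[ℂ] (Z1 ⊗ₜ[ℂ] Z2) + Z2 ⊗ₜ[ℂ] (Z3 ⊗ₜ[ℂ] Z1))
    {g : ℕ} (X : Fin g ⊕ Fin g → H) (Z W : H) :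
    Mhat (N (Z ⊗ₜ[ℂ] sympI X) ⊗ₜ[ℂ] N (W ⊗ₜ[ℂ] sympI X)) =
      sympSum X fun c d => sympSum X fun a b =>
        3 * (m Z W * (m a c * m b d) + m a W * m b c * m Z d + m Z c * (m a d * m b W)) := by
  simp only [sympI, sympSum, sum_tmul, sub_tmul, tmul_sum, tmul_sub, map_sum, map_sub,
    mhat_cyclicSymm_tmul hMhat hN]

theorem stmt8_general {H : Type*} [AddCommGroup H] [Module ℂ H] {g : ℕ}
    (m : H →ₗ[ℂ] H →ₗ[ℂ] ℂ) (halt : ∀ x : H, m x x = 0)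
    (X : Module.Basis (Fin g ⊕ Fin g) ℂ H)
    (hX1 : ∀ i j, m (X (Sum.inl i)) (X (Sum.inr j)) = if i = j then 1 else 0)
    (hX2 : ∀ i j, m (X (Sum.inl i)) (X (Sum.inl j)) = 0)
    (hX3 : ∀ i j, m (X (Sum.inr i)) (X (Sum.inr j)) = 0)
    -- the linear map `M̂ : H^{⊗6} → ℂ` with `M̂(Z₁⊗Z₂⊗Z₃⊗W₁⊗W₂⊗W₃) = (Z₁·W₁)(Z₂·W₂)(Z₃·W₃)`
    (Mhat : (H ⊗[ℂ] (H ⊗[ℂ] H)) ⊗[ℂ] (H ⊗[ℂ] (H ⊗[ℂ] H)) →ₗ[ℂ] ℂ)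
    (hMhat : ∀ Z1 Z2 Z3 W1 W2 W3 : H,
      Mhat ((Z1 ⊗ₜ[ℂ] (Z2 ⊗ₜ[ℂ] Z3)) ⊗ₜ[ℂ] (W1 ⊗ₜ[ℂ] (W2 ⊗ₜ[ℂ] W3)))
        = m Z1 W1 * m Z2 W2 * m Z3 W3)
    -- the cyclic symmetrizer `N = 1 + c + c²` on `H^{⊗3}`, `c(Z₁ ⊗ Z₂ ⊗ Z₃) = Z₃ ⊗ Z₁ ⊗ Z₂`
    (N : H ⊗[ℂ] (H ⊗[ℂ] H) →ₗ[ℂ] H ⊗[ℂ] (H ⊗[ℂ] H))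
    (hN : ∀ Z1 Z2 Z3 : H, N (Z1 ⊗ₜ[ℂ] (Z2 ⊗ₜ[ℂ] Z3)) =
      Z1 ⊗ₜ[ℂ] (Z2 ⊗ₜ[ℂ] Z3) + Z3 ⊗ₜ[ℂ] (Z1 ⊗ₜ[ℂ] Z2) + Z2 ⊗ₜ[ℂ] (Z3 ⊗ₜ[ℂ] Z1))
    (Z W : H) :
    Mhat (N (Z ⊗ₜ[ℂ] sympI (⇑X)) ⊗ₜ[ℂ] N (W ⊗ₜ[ℂ] sympI (⇑X)))
      = 3 * (2 * (g : ℂ) - 2) * m Z W := by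
  have hm : m.IsAlt := halt
  rw [mhat_cyclicSymm_sympI hMhat hN]
  simp only [sympSum_add, sympSum_mul_left, sympSum_mul_right,
    sympSum_apply_mul_apply_flip hm hX1 hX2 hX3, sympSum_apply_mul_apply hm hX1 hX2 hX3,
    sympSum_flip_apply_mul_apply hm hX1 hX2 hX3, sympSum_self hm hX1, Fintype.card_fin]
  rw [← hm.neg W Z]
  ring

/-- for all `Z, W ∈ H`, `M̂(N(Z ⊗ I) ⊗ N(W ⊗ I)) = 3(2g−2)(Z·W)`. -/
theorem stmt8 {H : Type*} [AddCommGroup H] [Module ℂ H] {g : ℕ} (hg : 1 ≤ g)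
    (m : H →ₗ[ℂ] H →ₗ[ℂ] ℂ) (halt : ∀ x : H, m x x = 0)
    (X : Module.Basis (Fin g ⊕ Fin g) ℂ H)
    (hX1 : ∀ i j, m (X (Sum.inl i)) (X (Sum.inr j)) = if i = j then 1 else 0)
    (hX2 : ∀ i j, m (X (Sum.inl i)) (X (Sum.inl j)) = 0)
    (hX3 : ∀ i j, m (X (Sum.inr i)) (X (Sum.inr j)) = 0)
    -- the linear map `M̂ : H^{⊗6} → ℂ` with `M̂(Z₁⊗Z₂⊗Z₃⊗W₁⊗W₂⊗W₃) = (Z₁·W₁)(Z₂·W₂)(Z₃·W₃)`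
    (Mhat : (H ⊗[ℂ] (H ⊗[ℂ] H)) ⊗[ℂ] (H ⊗[ℂ] (H ⊗[ℂ] H)) →ₗ[ℂ] ℂ)
    (hMhat : ∀ Z1 Z2 Z3 W1 W2 W3 : H,
      Mhat ((Z1 ⊗ₜ[ℂ] (Z2 ⊗ₜ[ℂ] Z3)) ⊗ₜ[ℂ] (W1 ⊗ₜ[ℂ] (W2 ⊗ₜ[ℂ] W3)))
        = m Z1 W1 * m Z2 W2 * m Z3 W3)
    -- the cyclic symmetrizer `N = 1 + c + c²` on `H^{⊗3}`, `c(Z₁ ⊗ Z₂ ⊗ Z₃) = Z₃ ⊗ Z₁ ⊗ Z₂`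
    (N : H ⊗[ℂ] (H ⊗[ℂ] H) →ₗ[ℂ] H ⊗[ℂ] (H ⊗[ℂ] H))
    (hN : ∀ Z1 Z2 Z3 : H, N (Z1 ⊗ₜ[ℂ] (Z2 ⊗ₜ[ℂ] Z3)) =
      Z1 ⊗ₜ[ℂ] (Z2 ⊗ₜ[ℂ] Z3) + Z3 ⊗ₜ[ℂ] (Z1 ⊗ₜ[ℂ] Z2) + Z2 ⊗ₜ[ℂ] (Z3 ⊗ₜ[ℂ] Z1))
    (Z W : H) :
    Mhat (N (Z ⊗ₜ[ℂ] sympI (⇑X)) ⊗ₜ[ℂ] N (W ⊗ₜ[ℂ] sympI (⇑X)))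
      = 3 * (2 * (g : ℂ) - 2) * m Z W :=
  stmt8_general m halt X hX1 hX2 hX3 Mhat hMhat N hN Z W
end
end

section
/- Assume g ≥ 2. For all decomposable elements z = Z_1 ∧ Z_2 ∧ Z_3 and w = W_1 ∧ W_2 ∧ W_3 of ⋀³H, with w^H := q_H(p_H(w)) and z^H := q_H(p_H(z)), one has M̂(ι(z) ⊗ ι(w^H)) = (3/(2g−2)) M_1(z ⊗ w) and M̂(ι(z^H) ⊗ ι(w)) = (3/(2g−2)) M_1(z ⊗ w). -/
open TensorProduct

noncomputable section

/-- The wedge product `v 0 ∧ v 1 ∧ v 2` as an element of the third exterior power `⋀³H`. -/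
def wedge3 {H : Type*} [AddCommGroup H] [Module ℂ H] (v : Fin 3 → H) : ⋀[ℂ]^3 H :=
  ⟨ExteriorAlgebra.ιMulti ℂ 3 v, ExteriorAlgebra.ιMulti_range ℂ 3 ⟨v, rfl⟩⟩

section

open Equiv

variable (R : Type*) {H : Type*} [CommRing R] [AddCommGroup H] [Module R H]

def antisymmTensor3 (v : Fin 3 → H) : H ⊗[R] (H ⊗[R] H) :=
  ∑ σ : Perm (Fin 3), (Perm.sign σ : ℤ) • (v (σ 0) ⊗ₜ[R] (v (σ 1) ⊗ₜ[R] v (σ 2)))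

lemma antisymmTensor3_eq (v : Fin 3 → H) : antisymmTensor3 R v =
    v 0 ⊗ₜ (v 1 ⊗ₜ v 2) - v 1 ⊗ₜ (v 0 ⊗ₜ v 2) - v 2 ⊗ₜ (v 1 ⊗ₜ v 0)
      - v 0 ⊗ₜ (v 2 ⊗ₜ v 1) + v 1 ⊗ₜ (v 2 ⊗ₜ v 0) + v 2 ⊗ₜ (v 0 ⊗ₜ v 1) := by
  have huniv : (Finset.univ : Finset (Perm (Fin 3))) =
      {1, swap 0 1, swap 0 2, swap 1 2, swap 0 1 * swap 1 2, swap 1 2 * swap 0 1} := by decide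
  rw [antisymmTensor3, huniv, Finset.sum_insert (by decide), Finset.sum_insert (by decide),
    Finset.sum_insert (by decide), Finset.sum_insert (by decide), Finset.sum_insert (by decide),
    Finset.sum_singleton]
  simp only [Perm.sign_one, Units.val_one, Perm.coe_one, id_eq, one_smul, Perm.sign_swap',
    zero_ne_one, ↓reduceIte, Units.val_neg, Int.reduceNeg, swap_apply_left, swap_apply_right, ne_eq,
    Fin.reduceEq, not_false_eq_true, swap_apply_of_ne_of_ne, neg_smul, one_ne_zero, Perm.sign_mul,
    mul_neg, mul_one, neg_neg, Perm.coe_mul, Function.comp_apply]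
  abel

variable {R} {m : H →ₗ[R] H →ₗ[R] R}
  {M : (H ⊗[R] (H ⊗[R] H)) ⊗[R] (H ⊗[R] (H ⊗[R] H)) →ₗ[R] R}

def contractTriple (m : H →ₗ[R] H →ₗ[R] R) (v : Fin 3 → H) : H :=
  m (v 1) (v 2) • v 0 + m (v 2) (v 0) • v 1 + m (v 0) (v 1) • v 2

lemma apply_antisymmTensor3_of_contraction (hm : m.IsAlt) {c : H ⊗[R] (H ⊗[R] H) →ₗ[R] H}
    (hc : ∀ Z1 Z2 Z3 : H, c (Z1 ⊗ₜ (Z2 ⊗ₜ Z3)) = m Z1 Z2 • Z3) (v : Fin 3 → H) :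
    c (antisymmTensor3 R v) = (2 : R) • contractTriple m v := by
  rw [antisymmTensor3_eq]
  simp only [map_sub, map_add, hc, contractTriple, ← hm.neg (v 0) (v 1), ← hm.neg (v 1) (v 2),
    ← hm.neg (v 2) (v 0)]
  module

lemma apply_antisymmTensor3_tmul_of_pairing (hm : m.IsAlt)
    (hM : ∀ v1 v2 v3 v4 v5 v6 : H,
      M ((v1 ⊗ₜ (v2 ⊗ₜ v3)) ⊗ₜ (v4 ⊗ₜ (v5 ⊗ₜ v6))) = m v1 v2 * m v3 v4 * m v5 v6)
    (v w : Fin 3 → H) :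
    M (antisymmTensor3 R v ⊗ₜ antisymmTensor3 R w)
      = 4 * m (contractTriple m v) (contractTriple m w) := by
  rw [antisymmTensor3_eq, antisymmTensor3_eq]
  simp only [tmul_sub, tmul_add, sub_tmul, add_tmul, map_sub, map_add, hM, contractTriple,
    map_smul, LinearMap.add_apply, LinearMap.smul_apply, smul_eq_mul,
    ← hm.neg (v 0) (v 1), ← hm.neg (v 1) (v 2), ← hm.neg (v 2) (v 0),
    ← hm.neg (w 0) (w 1), ← hm.neg (w 1) (w 2), ← hm.neg (w 2) (w 0)]
  ring

lemma apply_antisymmTensor3_tmul_eq_det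
    (hM : ∀ Z1 Z2 Z3 W1 W2 W3 : H,
      M ((Z1 ⊗ₜ (Z2 ⊗ₜ Z3)) ⊗ₜ (W1 ⊗ₜ (W2 ⊗ₜ W3))) = m Z1 W1 * m Z2 W2 * m Z3 W3)
    (v w : Fin 3 → H) :
    M (antisymmTensor3 R v ⊗ₜ antisymmTensor3 R w)
      = 6 * (Matrix.of fun a b ↦ m (v a) (w b)).det := by
  rw [antisymmTensor3_eq, antisymmTensor3_eq, Matrix.det_fin_three]
  simp only [tmul_sub, tmul_add, sub_tmul, add_tmul, map_sub, map_add, hM, Matrix.of_apply]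
  ring

lemma apply_antisymmTensor3_tmul_comm (hm : m.IsAlt)
    (hM : ∀ Z1 Z2 Z3 W1 W2 W3 : H,
      M ((Z1 ⊗ₜ (Z2 ⊗ₜ Z3)) ⊗ₜ (W1 ⊗ₜ (W2 ⊗ₜ W3))) = m Z1 W1 * m Z2 W2 * m Z3 W3)
    (v w : Fin 3 → H) :
    M (antisymmTensor3 R w ⊗ₜ antisymmTensor3 R v)
      = -M (antisymmTensor3 R v ⊗ₜ antisymmTensor3 R w) := by
  have hT : (Matrix.of fun a b ↦ m (w a) (v b))
      = -(Matrix.of fun a b ↦ m (v a) (w b)).transpose := by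
    ext a b
    simp [← hm.neg (v b)]
  rw [apply_antisymmTensor3_tmul_eq_det hM, apply_antisymmTensor3_tmul_eq_det hM, hT,
    Matrix.det_neg, Matrix.det_transpose]
  simp [pow_succ]

variable {g : ℕ}

structure IsSymplecticBasis (m : H →ₗ[R] H →ₗ[R] R) (X : Module.Basis (Fin g ⊕ Fin g) R H) :
    Prop where
  inl_inr : ∀ i j, m (X (.inl i)) (X (.inr j)) = if i = j then 1 else 0
  inl_inl : ∀ i j, m (X (.inl i)) (X (.inl j)) = 0
  inr_inr : ∀ i j, m (X (.inr i)) (X (.inr j)) = 0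

namespace IsSymplecticBasis

variable {X : Module.Basis (Fin g ⊕ Fin g) R H}

lemma sum_mul_sub_mul (hm : m.IsAlt) (hX : IsSymplecticBasis m X) (A B : H) :
    ∑ i, (m A (X (.inl i)) * m B (X (.inr i)) - m A (X (.inr i)) * m B (X (.inl i))) = m A B := by
  suffices h : ∑ i, (m A (X (.inl i)) • m.flip (X (.inr i))
      - m A (X (.inr i)) • m.flip (X (.inl i))) = m A by
    simpa using LinearMap.congr_fun h B
  refine X.ext fun j ↦ ?_
  rcases j with j | j
  · simp [hX.inl_inr, hX.inl_inl]
  · have hinr_inl : ∀ i, m (X (.inr j)) (X (.inl i)) = -(if i = j then 1 else 0) := fun i ↦ by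
      rw [← hm.neg, hX.inl_inr]
    simp [hinr_inl, hX.inr_inr]

lemma sum_det (hm : m.IsAlt) (hX : IsSymplecticBasis m X) (v : Fin 3 → H) (P : H) :
    ∑ i, (Matrix.of fun a b ↦ m (v a) (![P, X (.inl i), X (.inr i)] b)).det
      = m (contractTriple m v) P := by
  have hc : m (contractTriple m v) P
      = m (v 0) P * m (v 1) (v 2) - m (v 1) P * m (v 0) (v 2) + m (v 2) P * m (v 0) (v 1) := by
    simp only [contractTriple, ← hm.neg (v 0) (v 2), neg_smul, map_add, map_smul, map_neg,
      LinearMap.add_apply, LinearMap.smul_apply, smul_eq_mul, LinearMap.neg_apply]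
    ring
  rw [hc, ← hX.sum_mul_sub_mul hm (v 1) (v 2), ← hX.sum_mul_sub_mul hm (v 0) (v 2),
    ← hX.sum_mul_sub_mul hm (v 0) (v 1), Finset.mul_sum, Finset.mul_sum, Finset.mul_sum,
    ← Finset.sum_sub_distrib, ← Finset.sum_add_distrib]
  refine Finset.sum_congr rfl fun i _ ↦ ?_
  simp only [Matrix.det_fin_three, Matrix.of_apply, Matrix.cons_val_zero, Matrix.cons_val_one,
    Matrix.cons_val]
  ring

lemma apply_antisymmTensor3_tmul_sum (hm : m.IsAlt) (hX : IsSymplecticBasis m X)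
    (hM : ∀ Z1 Z2 Z3 W1 W2 W3 : H,
      M ((Z1 ⊗ₜ (Z2 ⊗ₜ Z3)) ⊗ₜ (W1 ⊗ₜ (W2 ⊗ₜ W3))) = m Z1 W1 * m Z2 W2 * m Z3 W3)
    (v : Fin 3 → H) (P : H) :
    M (antisymmTensor3 R v ⊗ₜ ∑ i, antisymmTensor3 R ![P, X (.inl i), X (.inr i)])
      = 6 * m (contractTriple m v) P := by
  simp only [tmul_sum, map_sum, apply_antisymmTensor3_tmul_eq_det hM, ← Finset.mul_sum,
    hX.sum_det hm]

lemma apply_sum_tmul_antisymmTensor3 (hm : m.IsAlt) (hX : IsSymplecticBasis m X)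
    (hM : ∀ Z1 Z2 Z3 W1 W2 W3 : H,
      M ((Z1 ⊗ₜ (Z2 ⊗ₜ Z3)) ⊗ₜ (W1 ⊗ₜ (W2 ⊗ₜ W3))) = m Z1 W1 * m Z2 W2 * m Z3 W3)
    (w : Fin 3 → H) (P : H) :
    M ((∑ i, antisymmTensor3 R ![P, X (.inl i), X (.inr i)]) ⊗ₜ antisymmTensor3 R w)
      = 6 * m P (contractTriple m w) := by
  simp only [sum_tmul, map_sum, apply_antisymmTensor3_tmul_comm hm hM w]
  rw [Finset.sum_neg_distrib, ← map_sum, ← tmul_sum, hX.apply_antisymmTensor3_tmul_sum hm hM,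
    ← hm.neg P]
  ring

end IsSymplecticBasis

end

theorem stmt9_general {H : Type*} [AddCommGroup H] [Module ℂ H] {g : ℕ}
    (m : H →ₗ[ℂ] H →ₗ[ℂ] ℂ) (halt : ∀ x : H, m x x = 0)
    (X : Module.Basis (Fin g ⊕ Fin g) ℂ H)
    (hX1 : ∀ i j, m (X (Sum.inl i)) (X (Sum.inr j)) = if i = j then 1 else 0)
    (hX2 : ∀ i j, m (X (Sum.inl i)) (X (Sum.inl j)) = 0)
    (hX3 : ∀ i j, m (X (Sum.inr i)) (X (Sum.inr j)) = 0)
    -- `(m ⊗ id_H) : H^{⊗3} → H`, contraction of the first two tensor factors by `m`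
    (c12 : H ⊗[ℂ] (H ⊗[ℂ] H) →ₗ[ℂ] H)
    (hc12 : ∀ Z1 Z2 Z3 : H, c12 (Z1 ⊗ₜ[ℂ] (Z2 ⊗ₜ[ℂ] Z3)) = m Z1 Z2 • Z3)
    -- the embedding `ι : ⋀³H → H^{⊗3}`
    (ι : ⋀[ℂ]^3 H →ₗ[ℂ] H ⊗[ℂ] (H ⊗[ℂ] H))
    (hι : ∀ v : Fin 3 → H, ι (wedge3 v) =
      ∑ σ : Equiv.Perm (Fin 3),
        (Equiv.Perm.sign σ : ℤ) • (v (σ 0) ⊗ₜ[ℂ] (v (σ 1) ⊗ₜ[ℂ] v (σ 2))))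
    -- the linear map `M̂ : H^{⊗6} → ℂ` with `M̂(Z₁⊗Z₂⊗Z₃⊗W₁⊗W₂⊗W₃) = (Z₁·W₁)(Z₂·W₂)(Z₃·W₃)`
    (Mhat : (H ⊗[ℂ] (H ⊗[ℂ] H)) ⊗[ℂ] (H ⊗[ℂ] (H ⊗[ℂ] H)) →ₗ[ℂ] ℂ)
    (hMhat : ∀ Z1 Z2 Z3 W1 W2 W3 : H,
      Mhat ((Z1 ⊗ₜ[ℂ] (Z2 ⊗ₜ[ℂ] Z3)) ⊗ₜ[ℂ] (W1 ⊗ₜ[ℂ] (W2 ⊗ₜ[ℂ] W3)))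
        = m Z1 W1 * m Z2 W2 * m Z3 W3)
    -- the linear map `m ⊗ m ⊗ m : H^{⊗6} → ℂ` with
    -- `(m ⊗ m ⊗ m)(v₁ ⊗ ⋯ ⊗ v₆) = (v₁·v₂)(v₃·v₄)(v₅·v₆)`, so that
    -- `M₁(z ⊗ w) = (m ⊗ m ⊗ m)(ι(z) ⊗ ι(w))`
    (mmm : (H ⊗[ℂ] (H ⊗[ℂ] H)) ⊗[ℂ] (H ⊗[ℂ] (H ⊗[ℂ] H)) →ₗ[ℂ] ℂ)
    (hmmm : ∀ v1 v2 v3 v4 v5 v6 : H,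
      mmm ((v1 ⊗ₜ[ℂ] (v2 ⊗ₜ[ℂ] v3)) ⊗ₜ[ℂ] (v4 ⊗ₜ[ℂ] (v5 ⊗ₜ[ℂ] v6)))
        = m v1 v2 * m v3 v4 * m v5 v6)
    -- `q_H : H → ⋀³H`, `q_H(Z) = Z ∧ I = Σᵢ Z ∧ Xᵢ ∧ X_{g+i}`
    (qH : H → ⋀[ℂ]^3 H)
    (hqH : ∀ Z : H, qH Z = ∑ i : Fin g, wedge3 ![Z, X (Sum.inl i), X (Sum.inr i)])
    -- `p_H : ⋀³H → H`, `p_H(z) = (1/(2g−2)) (m ⊗ id_H)(ι(z))`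
    (pH : ⋀[ℂ]^3 H → H)
    (hpH : ∀ z : ⋀[ℂ]^3 H, pH z = (1 / (2 * (g : ℂ) - 2)) • c12 (ι z))
    (Z1 Z2 Z3 W1 W2 W3 : H) :
    Mhat (ι (wedge3 ![Z1, Z2, Z3]) ⊗ₜ[ℂ] ι (qH (pH (wedge3 ![W1, W2, W3]))))
      = (3 / (2 * (g : ℂ) - 2)) * mmm (ι (wedge3 ![Z1, Z2, Z3]) ⊗ₜ[ℂ] ι (wedge3 ![W1, W2, W3])) ∧
    Mhat (ι (qH (pH (wedge3 ![Z1, Z2, Z3]))) ⊗ₜ[ℂ] ι (wedge3 ![W1, W2, W3]))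
      = (3 / (2 * (g : ℂ) - 2)) * mmm (ι (wedge3 ![Z1, Z2, Z3]) ⊗ₜ[ℂ] ι (wedge3 ![W1, W2, W3])) := by
  have hm : m.IsAlt := halt
  have hX : IsSymplecticBasis m X := ⟨hX1, hX2, hX3⟩
  have hι' : ∀ v, ι (wedge3 v) = antisymmTensor3 ℂ v := hι
  have hιq : ∀ P, ι (qH P) = ∑ i, antisymmTensor3 ℂ ![P, X (.inl i), X (.inr i)] := fun P ↦ by
    simp only [hqH, map_sum, hι']
  have hp : ∀ v, pH (wedge3 v) = (2 / (2 * (g : ℂ) - 2)) • contractTriple m v := fun v ↦ by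
    rw [hpH, hι', apply_antisymmTensor3_of_contraction hm hc12, smul_smul, one_div,
      ← div_eq_inv_mul]
  simp only [hι', hιq, hp, apply_antisymmTensor3_tmul_of_pairing hm hmmm,
    hX.apply_antisymmTensor3_tmul_sum hm hMhat, hX.apply_sum_tmul_antisymmTensor3 hm hMhat,
    map_smul, LinearMap.smul_apply, smul_eq_mul]
  constructor <;> ring

/-- assume `g ≥ 2`.  For all decomposable `z = Z₁ ∧ Z₂ ∧ Z₃` and
`w = W₁ ∧ W₂ ∧ W₃` in `⋀³H`, with `w^H := q_H(p_H(w))` and `z^H := q_H(p_H(z))`, one has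
`M̂(ι(z) ⊗ ι(w^H)) = (3/(2g−2)) M₁(z ⊗ w)` and `M̂(ι(z^H) ⊗ ι(w)) = (3/(2g−2)) M₁(z ⊗ w)`,
where `M₁(z ⊗ w) = (m ⊗ m ⊗ m)(ι(z) ⊗ ι(w))`. -/
theorem stmt9 {H : Type*} [AddCommGroup H] [Module ℂ H] {g : ℕ} (hg : 2 ≤ g)
    (m : H →ₗ[ℂ] H →ₗ[ℂ] ℂ) (halt : ∀ x : H, m x x = 0)
    (X : Module.Basis (Fin g ⊕ Fin g) ℂ H)
    (hX1 : ∀ i j, m (X (Sum.inl i)) (X (Sum.inr j)) = if i = j then 1 else 0)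
    (hX2 : ∀ i j, m (X (Sum.inl i)) (X (Sum.inl j)) = 0)
    (hX3 : ∀ i j, m (X (Sum.inr i)) (X (Sum.inr j)) = 0)
    -- `(m ⊗ id_H) : H^{⊗3} → H`, contraction of the first two tensor factors by `m`
    (c12 : H ⊗[ℂ] (H ⊗[ℂ] H) →ₗ[ℂ] H)
    (hc12 : ∀ Z1 Z2 Z3 : H, c12 (Z1 ⊗ₜ[ℂ] (Z2 ⊗ₜ[ℂ] Z3)) = m Z1 Z2 • Z3)
    -- the embedding `ι : ⋀³H → H^{⊗3}`
    (ι : ⋀[ℂ]^3 H →ₗ[ℂ] H ⊗[ℂ] (H ⊗[ℂ] H))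
    (hι : ∀ v : Fin 3 → H, ι (wedge3 v) =
      ∑ σ : Equiv.Perm (Fin 3),
        (Equiv.Perm.sign σ : ℤ) • (v (σ 0) ⊗ₜ[ℂ] (v (σ 1) ⊗ₜ[ℂ] v (σ 2))))
    -- the linear map `M̂ : H^{⊗6} → ℂ` with `M̂(Z₁⊗Z₂⊗Z₃⊗W₁⊗W₂⊗W₃) = (Z₁·W₁)(Z₂·W₂)(Z₃·W₃)`
    (Mhat : (H ⊗[ℂ] (H ⊗[ℂ] H)) ⊗[ℂ] (H ⊗[ℂ] (H ⊗[ℂ] H)) →ₗ[ℂ] ℂ)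
    (hMhat : ∀ Z1 Z2 Z3 W1 W2 W3 : H,
      Mhat ((Z1 ⊗ₜ[ℂ] (Z2 ⊗ₜ[ℂ] Z3)) ⊗ₜ[ℂ] (W1 ⊗ₜ[ℂ] (W2 ⊗ₜ[ℂ] W3)))
        = m Z1 W1 * m Z2 W2 * m Z3 W3)
    -- the linear map `m ⊗ m ⊗ m : H^{⊗6} → ℂ` with
    -- `(m ⊗ m ⊗ m)(v₁ ⊗ ⋯ ⊗ v₆) = (v₁·v₂)(v₃·v₄)(v₅·v₆)`, so that
    -- `M₁(z ⊗ w) = (m ⊗ m ⊗ m)(ι(z) ⊗ ι(w))`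
    (mmm : (H ⊗[ℂ] (H ⊗[ℂ] H)) ⊗[ℂ] (H ⊗[ℂ] (H ⊗[ℂ] H)) →ₗ[ℂ] ℂ)
    (hmmm : ∀ v1 v2 v3 v4 v5 v6 : H,
      mmm ((v1 ⊗ₜ[ℂ] (v2 ⊗ₜ[ℂ] v3)) ⊗ₜ[ℂ] (v4 ⊗ₜ[ℂ] (v5 ⊗ₜ[ℂ] v6)))
        = m v1 v2 * m v3 v4 * m v5 v6)
    -- `q_H : H → ⋀³H`, `q_H(Z) = Z ∧ I = Σᵢ Z ∧ Xᵢ ∧ X_{g+i}`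
    (qH : H → ⋀[ℂ]^3 H)
    (hqH : ∀ Z : H, qH Z = ∑ i : Fin g, wedge3 ![Z, X (Sum.inl i), X (Sum.inr i)])
    -- `p_H : ⋀³H → H`, `p_H(z) = (1/(2g−2)) (m ⊗ id_H)(ι(z))`
    (pH : ⋀[ℂ]^3 H → H)
    (hpH : ∀ z : ⋀[ℂ]^3 H, pH z = (1 / (2 * (g : ℂ) - 2)) • c12 (ι z))
    (Z1 Z2 Z3 W1 W2 W3 : H) :
    Mhat (ι (wedge3 ![Z1, Z2, Z3]) ⊗ₜ[ℂ] ι (qH (pH (wedge3 ![W1, W2, W3]))))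
      = (3 / (2 * (g : ℂ) - 2)) * mmm (ι (wedge3 ![Z1, Z2, Z3]) ⊗ₜ[ℂ] ι (wedge3 ![W1, W2, W3])) ∧
    Mhat (ι (qH (pH (wedge3 ![Z1, Z2, Z3]))) ⊗ₜ[ℂ] ι (wedge3 ![W1, W2, W3]))
      = (3 / (2 * (g : ℂ) - 2)) * mmm (ι (wedge3 ![Z1, Z2, Z3]) ⊗ₜ[ℂ] ι (wedge3 ![W1, W2, W3])) :=
  stmt9_general m halt X hX1 hX2 hX3 c12 hc12 ι hι Mhat hMhat mmm hmmm qH hqH pH hpH Z1 Z2 Z3 W1 W2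
    W3
end
end

section
/- Assume g ≥ 2. For all decomposable elements z = Z_1 ∧ Z_2 ∧ Z_3 and w = W_1 ∧ W_2 ∧ W_3 of ⋀³H, with z^H := q_H(p_H(z)) and w^H := q_H(p_H(w)), one has M̂(ι(z^H) ⊗ ι(w^H)) = (3/(2g−2)) M_1(z ⊗ w). -/
open TensorProduct

noncomputable section

/-! On decomposable tensors `M̂(ι(a₁∧a₂∧a₃) ⊗ ι(b₁∧b₂∧b₃)) = 3! · det (aᵢ·bⱼ)`. For
`q_H(A) = Σᵢ A ∧ Xᵢ ∧ X_{g+i}` the symplectic relations kill the Gram determinants of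
`(A, Xᵢ, X_{g+i})` against `(B, Xⱼ, X_{g+j})` with `i ≠ j`, and by the expansion
`B = Σᵢ (Xᵢ·B) X_{g+i} − (X_{g+i}·B) Xᵢ` the diagonal ones sum to `(g−1) A·B`; hence
`M̂(ι q_H A ⊗ ι q_H B) = 6(g−1) A·B`. On the other side, a cyclic relabelling of the permutations
in `ι w` gives `M₁(z ⊗ w) = (m⊗id)(ι z) · (m⊗id)(ι w) = (2g−2)² p_H(z)·p_H(w)`. -/

open Equiv Equiv.Perm

theorem sum_sign_mul_sign_mul_prod {n R : Type*} [Fintype n] [DecidableEq n] [CommRing R]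
    (f : n → n → R) :
    ∑ σ : Perm n, ∑ τ : Perm n, ((sign σ : ℤ) : R) * (sign τ : ℤ) * ∏ k, f (σ k) (τ k) =
      Fintype.card (Perm n) * (Matrix.of f).det := by
  have inner (σ : Perm n) :
      ∑ τ : Perm n, ((sign σ : ℤ) : R) * (sign τ : ℤ) * ∏ k, f (σ k) (τ k) = (Matrix.of f).det := by
    rw [← Matrix.det_transpose, Matrix.det_apply', ← Equiv.sum_comp (Equiv.mulRight σ)]
    refine Finset.sum_congr rfl fun ρ _ => ?_
    rw [← Equiv.prod_comp σ⁻¹]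
    simp [← Int.cast_mul, mul_left_comm (sign σ : ℤ)]
  simp [inner]

section AltTensor

variable {R M : Type*} [CommRing R] [AddCommGroup M] [Module R M]

def altTensor3 (v : Fin 3 → M) : M ⊗[R] (M ⊗[R] M) :=
  ∑ σ : Perm (Fin 3), (sign σ : ℤ) • (v (σ 0) ⊗ₜ[R] (v (σ 1) ⊗ₜ[R] v (σ 2)))

theorem apply_altTensor3_tmul_altTensor3
    (Φ : (M ⊗[R] (M ⊗[R] M)) ⊗[R] (M ⊗[R] (M ⊗[R] M)) →ₗ[R] R) (v w : Fin 3 → M) :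
    Φ (altTensor3 v ⊗ₜ altTensor3 w) =
      ∑ σ : Perm (Fin 3), ∑ τ : Perm (Fin 3), ((sign σ : ℤ) : R) * (sign τ : ℤ) *
        Φ ((v (σ 0) ⊗ₜ (v (σ 1) ⊗ₜ v (σ 2))) ⊗ₜ (w (τ 0) ⊗ₜ (w (τ 1) ⊗ₜ w (τ 2)))) := by
  simp only [altTensor3, sum_tmul, tmul_sum, map_sum, ← Int.cast_smul_eq_zsmul R, ← smul_tmul',
    tmul_smul, map_smul, smul_eq_mul, Finset.mul_sum, mul_assoc]
  exact Finset.sum_comm.trans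
    (Finset.sum_congr rfl fun _ _ => Finset.sum_congr rfl fun _ _ => by ring)

variable (m : M →ₗ[R] M →ₗ[R] R)

theorem pairing_altTensor3
    (Φ : (M ⊗[R] (M ⊗[R] M)) ⊗[R] (M ⊗[R] (M ⊗[R] M)) →ₗ[R] R)
    (hΦ : ∀ a b c a' b' c' : M,
      Φ ((a ⊗ₜ (b ⊗ₜ c)) ⊗ₜ (a' ⊗ₜ (b' ⊗ₜ c'))) = m a a' * m b b' * m c c')
    (v w : Fin 3 → M) :
    Φ (altTensor3 v ⊗ₜ altTensor3 w) = 6 * (Matrix.of fun i j => m (v i) (w j)).det := by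
  have h := sum_sign_mul_sign_mul_prod fun i j => m (v i) (w j)
  simp only [Fin.prod_univ_three, Fintype.card_perm, Fintype.card_fin,
    show Nat.factorial 3 = 6 from rfl, Nat.cast_ofNat] at h
  rw [apply_altTensor3_tmul_altTensor3, ← h]
  simp [hΦ, mul_assoc]

theorem contraction_altTensor3
    (Ψ : (M ⊗[R] (M ⊗[R] M)) ⊗[R] (M ⊗[R] (M ⊗[R] M)) →ₗ[R] R)
    (hΨ : ∀ a b c a' b' c' : M,
      Ψ ((a ⊗ₜ (b ⊗ₜ c)) ⊗ₜ (a' ⊗ₜ (b' ⊗ₜ c'))) = m a b * m c a' * m b' c')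
    (c : M ⊗[R] (M ⊗[R] M) →ₗ[R] M) (hc : ∀ a b c' : M, c (a ⊗ₜ (b ⊗ₜ c')) = m a b • c')
    (v w : Fin 3 → M) :
    Ψ (altTensor3 v ⊗ₜ altTensor3 w) = m (c (altTensor3 v)) (c (altTensor3 w)) := by
  rw [apply_altTensor3_tmul_altTensor3]
  simp only [altTensor3, map_sum, LinearMap.sum_apply, ← Int.cast_smul_eq_zsmul R, map_smul, hc,
    LinearMap.smul_apply, smul_eq_mul, Finset.mul_sum]
  conv_rhs => rw [Finset.sum_comm]
  refine Finset.sum_congr rfl fun σ _ => ?_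
  rw [← Equiv.sum_comp (Equiv.mulRight (finRotate 3)⁻¹)]
  refine Finset.sum_congr rfl fun τ _ => ?_
  have h0 : (finRotate 3)⁻¹ 0 = 2 := by decide
  have h1 : (finRotate 3)⁻¹ 1 = 0 := by decide
  have h2 : (finRotate 3)⁻¹ 2 = 1 := by decide
  have hs : sign (finRotate 3) = 1 := by decide
  simp only [coe_mulRight, Perm.mul_apply, h0, h1, h2, Perm.sign_mul, sign_inv, hs, mul_one, hΨ]
  ring

end AltTensor

section Symplectic

variable {R M : Type*} [CommRing R] [AddCommGroup M] [Module R M] {g : ℕ}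
  {m : M →ₗ[R] M →ₗ[R] R} {X : Module.Basis (Fin g ⊕ Fin g) R M}

theorem apply_inr_inl_of_isAlt (halt : m.IsAlt)
    (hX1 : ∀ i j, m (X (Sum.inl i)) (X (Sum.inr j)) = if i = j then 1 else 0) (i j : Fin g) :
    m (X (Sum.inr i)) (X (Sum.inl j)) = if i = j then -1 else 0 := by
  rw [← halt.neg, hX1]
  split_ifs <;> simp_all [eq_comm]

theorem apply_eq_sum_symplectic (halt : m.IsAlt)
    (hX1 : ∀ i j, m (X (Sum.inl i)) (X (Sum.inr j)) = if i = j then 1 else 0)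
    (hX2 : ∀ i j, m (X (Sum.inl i)) (X (Sum.inl j)) = 0)
    (hX3 : ∀ i j, m (X (Sum.inr i)) (X (Sum.inr j)) = 0) (A B : M) :
    m A B = ∑ i, (m A (X (Sum.inr i)) * m (X (Sum.inl i)) B
      - m A (X (Sum.inl i)) * m (X (Sum.inr i)) B) := by
  suffices m.flip B = ∑ i, (m (X (Sum.inl i)) B • m.flip (X (Sum.inr i))
      - m (X (Sum.inr i)) B • m.flip (X (Sum.inl i))) by
    simpa [mul_comm] using LinearMap.congr_fun this A
  refine X.ext fun k => ?_
  rcases k with j | j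
  · simp [hX1, hX2]
  · simp [apply_inr_inl_of_isAlt halt hX1, hX3]

theorem sum_det_pairing_symplectic (halt : m.IsAlt)
    (hX1 : ∀ i j, m (X (Sum.inl i)) (X (Sum.inr j)) = if i = j then 1 else 0)
    (hX2 : ∀ i j, m (X (Sum.inl i)) (X (Sum.inl j)) = 0)
    (hX3 : ∀ i j, m (X (Sum.inr i)) (X (Sum.inr j)) = 0) (A B : M) :
    ∑ i, ∑ j, (Matrix.of fun a b =>
        m (![A, X (Sum.inl i), X (Sum.inr i)] a) (![B, X (Sum.inl j), X (Sum.inr j)] b)).det =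
      ((g : R) - 1) * m A B := by
  have hYX := apply_inr_inl_of_isAlt halt hX1
  have hdet (i j : Fin g) : (Matrix.of fun a b =>
      m (![A, X (Sum.inl i), X (Sum.inr i)] a) (![B, X (Sum.inl j), X (Sum.inr j)] b)).det =
      if i = j then m A B + m A (X (Sum.inl i)) * m (X (Sum.inr i)) B
        - m A (X (Sum.inr i)) * m (X (Sum.inl i)) B else 0 := by
    rw [Matrix.det_fin_three]
    split_ifs with h
    · subst h
      simp only [Matrix.of_apply, Matrix.cons_val_zero, Matrix.cons_val_one, Matrix.cons_val, hX1,
        hX2, hX3, hYX, ↓reduceIte, mul_zero, zero_mul, mul_one, mul_neg, sub_neg_eq_add, zero_add,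
        sub_zero]
      ring
    · simp [hX1, hX2, hX3, hYX, h]
  simp only [hdet, Finset.sum_ite_eq, Finset.mem_univ, if_true]
  have hAB := apply_eq_sum_symplectic halt hX1 hX2 hX3 A B
  rw [Finset.sum_sub_distrib] at hAB
  rw [Finset.sum_sub_distrib, Finset.sum_add_distrib, Finset.sum_const, Finset.card_univ,
    Fintype.card_fin, nsmul_eq_mul]
  linear_combination hAB

end Symplectic

/-- assume `g ≥ 2`.  For all decomposable `z = Z₁ ∧ Z₂ ∧ Z₃` and
`w = W₁ ∧ W₂ ∧ W₃` in `⋀³H`, with `z^H := q_H(p_H(z))` and `w^H := q_H(p_H(w))`, one has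
`M̂(ι(z^H) ⊗ ι(w^H)) = (3/(2g−2)) M₁(z ⊗ w)`, where `M₁(z ⊗ w) = (m ⊗ m ⊗ m)(ι(z) ⊗ ι(w))`. -/
theorem stmt10 {H : Type*} [AddCommGroup H] [Module ℂ H] {g : ℕ} (hg : 2 ≤ g)
    (m : H →ₗ[ℂ] H →ₗ[ℂ] ℂ) (halt : ∀ x : H, m x x = 0)
    (X : Module.Basis (Fin g ⊕ Fin g) ℂ H)
    (hX1 : ∀ i j, m (X (Sum.inl i)) (X (Sum.inr j)) = if i = j then 1 else 0)
    (hX2 : ∀ i j, m (X (Sum.inl i)) (X (Sum.inl j)) = 0)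
    (hX3 : ∀ i j, m (X (Sum.inr i)) (X (Sum.inr j)) = 0)
    -- `(m ⊗ id_H) : H^{⊗3} → H`, contraction of the first two tensor factors by `m`
    (c12 : H ⊗[ℂ] (H ⊗[ℂ] H) →ₗ[ℂ] H)
    (hc12 : ∀ Z1 Z2 Z3 : H, c12 (Z1 ⊗ₜ[ℂ] (Z2 ⊗ₜ[ℂ] Z3)) = m Z1 Z2 • Z3)
    -- the embedding `ι : ⋀³H → H^{⊗3}`
    (ι : ⋀[ℂ]^3 H →ₗ[ℂ] H ⊗[ℂ] (H ⊗[ℂ] H))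
    (hι : ∀ v : Fin 3 → H, ι (wedge3 v) =
      ∑ σ : Equiv.Perm (Fin 3),
        (Equiv.Perm.sign σ : ℤ) • (v (σ 0) ⊗ₜ[ℂ] (v (σ 1) ⊗ₜ[ℂ] v (σ 2))))
    -- the linear map `M̂ : H^{⊗6} → ℂ` with `M̂(Z₁⊗Z₂⊗Z₃⊗W₁⊗W₂⊗W₃) = (Z₁·W₁)(Z₂·W₂)(Z₃·W₃)`
    (Mhat : (H ⊗[ℂ] (H ⊗[ℂ] H)) ⊗[ℂ] (H ⊗[ℂ] (H ⊗[ℂ] H)) →ₗ[ℂ] ℂ)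
    (hMhat : ∀ Z1 Z2 Z3 W1 W2 W3 : H,
      Mhat ((Z1 ⊗ₜ[ℂ] (Z2 ⊗ₜ[ℂ] Z3)) ⊗ₜ[ℂ] (W1 ⊗ₜ[ℂ] (W2 ⊗ₜ[ℂ] W3)))
        = m Z1 W1 * m Z2 W2 * m Z3 W3)
    -- the linear map `m ⊗ m ⊗ m : H^{⊗6} → ℂ` with
    -- `(m ⊗ m ⊗ m)(v₁ ⊗ ⋯ ⊗ v₆) = (v₁·v₂)(v₃·v₄)(v₅·v₆)`, so that
    -- `M₁(z ⊗ w) = (m ⊗ m ⊗ m)(ι(z) ⊗ ι(w))`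
    (mmm : (H ⊗[ℂ] (H ⊗[ℂ] H)) ⊗[ℂ] (H ⊗[ℂ] (H ⊗[ℂ] H)) →ₗ[ℂ] ℂ)
    (hmmm : ∀ v1 v2 v3 v4 v5 v6 : H,
      mmm ((v1 ⊗ₜ[ℂ] (v2 ⊗ₜ[ℂ] v3)) ⊗ₜ[ℂ] (v4 ⊗ₜ[ℂ] (v5 ⊗ₜ[ℂ] v6)))
        = m v1 v2 * m v3 v4 * m v5 v6)
    -- `q_H : H → ⋀³H`, `q_H(Z) = Z ∧ I = Σᵢ Z ∧ Xᵢ ∧ X_{g+i}`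
    (qH : H → ⋀[ℂ]^3 H)
    (hqH : ∀ Z : H, qH Z = ∑ i : Fin g, wedge3 ![Z, X (Sum.inl i), X (Sum.inr i)])
    -- `p_H : ⋀³H → H`, `p_H(z) = (1/(2g−2)) (m ⊗ id_H)(ι(z))`
    (pH : ⋀[ℂ]^3 H → H)
    (hpH : ∀ z : ⋀[ℂ]^3 H, pH z = (1 / (2 * (g : ℂ) - 2)) • c12 (ι z))
    (Z1 Z2 Z3 W1 W2 W3 : H) :
    Mhat (ι (qH (pH (wedge3 ![Z1, Z2, Z3]))) ⊗ₜ[ℂ] ι (qH (pH (wedge3 ![W1, W2, W3]))))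
      = (3 / (2 * (g : ℂ) - 2)) * mmm (ι (wedge3 ![Z1, Z2, Z3]) ⊗ₜ[ℂ] ι (wedge3 ![W1, W2, W3])) := by
  have hιw (v : Fin 3 → H) : ι (wedge3 v) = altTensor3 v := hι v
  have hιq (A : H) : ι (qH A) = ∑ i, altTensor3 ![A, X (Sum.inl i), X (Sum.inr i)] := by
    simp only [hqH, map_sum, hιw]
  have hMq (A B : H) : Mhat (ι (qH A) ⊗ₜ ι (qH B)) = 3 * (2 * (g : ℂ) - 2) * m A B := by
    simp only [hιq, sum_tmul, tmul_sum, map_sum, pairing_altTensor3 m Mhat hMhat, ← Finset.mul_sum]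
    rw [Finset.sum_comm, sum_det_pairing_symplectic halt hX1 hX2 hX3]
    ring
  have hg2 : 2 * (g : ℂ) - 2 ≠ 0 := by
    rw [sub_ne_zero]
    exact_mod_cast (by omega : 2 * g ≠ 2)
  rw [hMq, hpH, hpH, map_smul, map_smul, LinearMap.smul_apply, hιw, hιw,
    contraction_altTensor3 m mmm hmmm c12 hc12, smul_eq_mul, smul_eq_mul]
  field_simp
end
end

section
/- (Lemma 5.2 of the paper.) Assume g ≥ 2. For all decomposable elements z = Z_1 ∧ Z_2 ∧ Z_3 and w = W_1 ∧ W_2 ∧ W_3 of ⋀³H, with z^H := q_H(p_H(z)) and w^H := q_H(p_H(w)), one has M̂(ι(z − z^H) ⊗ ι(w − w^H)) = M_2(z ⊗ w) − (3/(2g−2)) M_1(z ⊗ w). -/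
/-!
For decomposable `z = a ∧ b ∧ c` every term is a polynomial in the pairings, and the contraction
`(m ⊗ id)(ι z)` equals `2 z⋆` with `z⋆ = (b·c) a + (c·a) b + (a·b) c`, so `z^H = z⋆ ∧ I / (g − 1)`.
Because the intersection element is dual to `m`, i.e.
`Σᵢ (A·Xᵢ)(B·X_{g+i}) − (A·X_{g+i})(B·Xᵢ) = A·B`, one finds
`M̂(ι z ⊗ ι(W ∧ I)) = 6 z⋆·W`, `M̂(ι(Z ∧ I) ⊗ ι(W ∧ I)) = 6 (g − 1) Z·W`, and
`(m ⊗ m ⊗ m)(ι z ⊗ ι w) = 4 z⋆·w⋆`. The two cross terms and the `z^H ⊗ w^H` term then add up to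
`−6 z⋆·w⋆ / (g − 1) = −(3 / (2g − 2)) M₁(z ⊗ w)`.
-/

open TensorProduct

noncomputable section

open Sum

theorem Matrix.det_fin_three_of {R : Type*} [CommRing R] (a b c d e f g h i : R) :
    !![a, b, c; d, e, f; g, h, i].det =
      a * e * i - a * f * h - b * d * i + b * f * g + c * d * h - c * e * g := by
  simp [Matrix.det_fin_three]

section SymplecticBasis

variable {R M : Type*} [CommRing R] [AddCommGroup M] [Module R M] {g : ℕ}

theorem sum_symplecticBasis_mul_sub_mul (m : M →ₗ[R] M →ₗ[R] R) (hm : m.IsAlt)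
    (X : Module.Basis (Fin g ⊕ Fin g) R M)
    (hX1 : ∀ i j, m (X (inl i)) (X (inr j)) = if i = j then 1 else 0)
    (hX2 : ∀ i j, m (X (inl i)) (X (inl j)) = 0)
    (hX3 : ∀ i j, m (X (inr i)) (X (inr j)) = 0) (A B : M) :
    ∑ i, (m A (X (inl i)) * m B (X (inr i)) - m A (X (inr i)) * m B (X (inl i))) = m A B := by
  let L : M →ₗ[R] M →ₗ[R] R := ∑ i,
    ((LinearMap.mul R R).compl₁₂ (m.flip (X (inl i))) (m.flip (X (inr i)))
      - (LinearMap.mul R R).compl₁₂ (m.flip (X (inr i))) (m.flip (X (inl i))))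
  have hX1' : ∀ i j, m (X (inr i)) (X (inl j)) = if j = i then -1 else 0 := fun i j => by
    rw [← hm.neg, hX1]
    split_ifs <;> simp
  -- both sides are bilinear in `A, B`, so it suffices to compare them on the basis `X`
  have hL : L = m := LinearMap.ext_basis X X fun i j => by
    rcases i with i | i <;> rcases j with j | j <;>
      simp [L, hX1, hX1', hX2, hX3, eq_comm]
  simpa [L] using LinearMap.congr_fun₂ hL A B

end SymplecticBasis

def tripleContraction {R M : Type*} [CommRing R] [AddCommGroup M] [Module R M]
    (m : M →ₗ[R] M →ₗ[R] R) (a b c : M) : M :=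
  m b c • a + m c a • b + m a b • c

section Antisymmetrization

variable {H : Type*} [AddCommGroup H] [Module ℂ H]

theorem iota_wedge3 (ι : ⋀[ℂ]^3 H →ₗ[ℂ] H ⊗[ℂ] (H ⊗[ℂ] H))
    (hι : ∀ v : Fin 3 → H, ι (wedge3 v) =
      ∑ σ : Equiv.Perm (Fin 3),
        (Equiv.Perm.sign σ : ℤ) • (v (σ 0) ⊗ₜ[ℂ] (v (σ 1) ⊗ₜ[ℂ] v (σ 2))))
    (a b c : H) :
    ι (wedge3 ![a, b, c]) =
      a ⊗ₜ (b ⊗ₜ c) - a ⊗ₜ (c ⊗ₜ b) - b ⊗ₜ (a ⊗ₜ c)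
        + b ⊗ₜ (c ⊗ₜ a) + c ⊗ₜ (a ⊗ₜ b) - c ⊗ₜ (b ⊗ₜ a) := by
  have huniv : (Finset.univ : Finset (Equiv.Perm (Fin 3))) =
      {1, Equiv.swap 0 1, Equiv.swap 0 2, Equiv.swap 1 2,
        Equiv.swap 0 1 * Equiv.swap 1 2, Equiv.swap 1 2 * Equiv.swap 0 1} := by
    decide
  simp +decide [hι, huniv, Finset.sum_insert, Equiv.swap_apply_def]
  abel

theorem contract_iota_wedge3 (m : H →ₗ[ℂ] H →ₗ[ℂ] ℂ) (hm : m.IsAlt)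
    (c12 : H ⊗[ℂ] (H ⊗[ℂ] H) →ₗ[ℂ] H)
    (hc12 : ∀ Z1 Z2 Z3 : H, c12 (Z1 ⊗ₜ[ℂ] (Z2 ⊗ₜ[ℂ] Z3)) = m Z1 Z2 • Z3)
    (ι : ⋀[ℂ]^3 H →ₗ[ℂ] H ⊗[ℂ] (H ⊗[ℂ] H))
    (hι : ∀ v : Fin 3 → H, ι (wedge3 v) =
      ∑ σ : Equiv.Perm (Fin 3),
        (Equiv.Perm.sign σ : ℤ) • (v (σ 0) ⊗ₜ[ℂ] (v (σ 1) ⊗ₜ[ℂ] v (σ 2))))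
    (a b c : H) :
    c12 (ι (wedge3 ![a, b, c])) = (2 : ℂ) • tripleContraction m a b c := by
  simp only [iota_wedge3 ι hι, map_sub, map_add, hc12, tripleContraction, ← hm.neg b a,
    ← hm.neg c b, ← hm.neg a c]
  module

theorem Mhat_iota_wedge3_tmul (m : H →ₗ[ℂ] H →ₗ[ℂ] ℂ)
    (ι : ⋀[ℂ]^3 H →ₗ[ℂ] H ⊗[ℂ] (H ⊗[ℂ] H))
    (hι : ∀ v : Fin 3 → H, ι (wedge3 v) =
      ∑ σ : Equiv.Perm (Fin 3),
        (Equiv.Perm.sign σ : ℤ) • (v (σ 0) ⊗ₜ[ℂ] (v (σ 1) ⊗ₜ[ℂ] v (σ 2))))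
    (Mhat : (H ⊗[ℂ] (H ⊗[ℂ] H)) ⊗[ℂ] (H ⊗[ℂ] (H ⊗[ℂ] H)) →ₗ[ℂ] ℂ)
    (hMhat : ∀ Z1 Z2 Z3 W1 W2 W3 : H,
      Mhat ((Z1 ⊗ₜ[ℂ] (Z2 ⊗ₜ[ℂ] Z3)) ⊗ₜ[ℂ] (W1 ⊗ₜ[ℂ] (W2 ⊗ₜ[ℂ] W3)))
        = m Z1 W1 * m Z2 W2 * m Z3 W3)
    (a b c d e f : H) :
    Mhat (ι (wedge3 ![a, b, c]) ⊗ₜ ι (wedge3 ![d, e, f])) =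
      6 * !![m a d, m a e, m a f; m b d, m b e, m b f; m c d, m c e, m c f].det := by
  simp only [iota_wedge3 ι hι, tmul_sub, sub_tmul, tmul_add, add_tmul, map_sub, map_add, hMhat,
    Matrix.det_fin_three_of]
  ring

theorem Mhat_iota_wedge3_tmul_comm (m : H →ₗ[ℂ] H →ₗ[ℂ] ℂ) (hm : m.IsAlt)
    (ι : ⋀[ℂ]^3 H →ₗ[ℂ] H ⊗[ℂ] (H ⊗[ℂ] H))
    (hι : ∀ v : Fin 3 → H, ι (wedge3 v) =
      ∑ σ : Equiv.Perm (Fin 3),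
        (Equiv.Perm.sign σ : ℤ) • (v (σ 0) ⊗ₜ[ℂ] (v (σ 1) ⊗ₜ[ℂ] v (σ 2))))
    (Mhat : (H ⊗[ℂ] (H ⊗[ℂ] H)) ⊗[ℂ] (H ⊗[ℂ] (H ⊗[ℂ] H)) →ₗ[ℂ] ℂ)
    (hMhat : ∀ Z1 Z2 Z3 W1 W2 W3 : H,
      Mhat ((Z1 ⊗ₜ[ℂ] (Z2 ⊗ₜ[ℂ] Z3)) ⊗ₜ[ℂ] (W1 ⊗ₜ[ℂ] (W2 ⊗ₜ[ℂ] W3)))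
        = m Z1 W1 * m Z2 W2 * m Z3 W3)
    (a b c d e f : H) :
    Mhat (ι (wedge3 ![a, b, c]) ⊗ₜ ι (wedge3 ![d, e, f])) =
      -Mhat (ι (wedge3 ![d, e, f]) ⊗ₜ ι (wedge3 ![a, b, c])) := by
  simp only [Mhat_iota_wedge3_tmul m ι hι Mhat hMhat, Matrix.det_fin_three_of,
    ← hm.neg d a, ← hm.neg d b, ← hm.neg d c,
    ← hm.neg e a, ← hm.neg e b, ← hm.neg e c, ← hm.neg f a, ← hm.neg f b, ← hm.neg f c]
  ring

theorem mmm_iota_wedge3_tmul (m : H →ₗ[ℂ] H →ₗ[ℂ] ℂ) (hm : m.IsAlt)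
    (ι : ⋀[ℂ]^3 H →ₗ[ℂ] H ⊗[ℂ] (H ⊗[ℂ] H))
    (hι : ∀ v : Fin 3 → H, ι (wedge3 v) =
      ∑ σ : Equiv.Perm (Fin 3),
        (Equiv.Perm.sign σ : ℤ) • (v (σ 0) ⊗ₜ[ℂ] (v (σ 1) ⊗ₜ[ℂ] v (σ 2))))
    (mmm : (H ⊗[ℂ] (H ⊗[ℂ] H)) ⊗[ℂ] (H ⊗[ℂ] (H ⊗[ℂ] H)) →ₗ[ℂ] ℂ)
    (hmmm : ∀ v1 v2 v3 v4 v5 v6 : H,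
      mmm ((v1 ⊗ₜ[ℂ] (v2 ⊗ₜ[ℂ] v3)) ⊗ₜ[ℂ] (v4 ⊗ₜ[ℂ] (v5 ⊗ₜ[ℂ] v6)))
        = m v1 v2 * m v3 v4 * m v5 v6)
    (a b c d e f : H) :
    mmm (ι (wedge3 ![a, b, c]) ⊗ₜ ι (wedge3 ![d, e, f])) =
      4 * m (tripleContraction m a b c) (tripleContraction m d e f) := by
  simp only [iota_wedge3 ι hι, tmul_sub, sub_tmul, tmul_add, add_tmul, map_sub, map_add, hmmm,
    tripleContraction, map_smul, LinearMap.add_apply, LinearMap.smul_apply, smul_eq_mul,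
    ← hm.neg b a, ← hm.neg c a, ← hm.neg c b, ← hm.neg e d, ← hm.neg f d, ← hm.neg f e]
  ring

end Antisymmetrization

section IntersectionElement

variable {H : Type*} [AddCommGroup H] [Module ℂ H] {g : ℕ}

theorem Mhat_iota_wedge3_tmul_wedgeI (m : H →ₗ[ℂ] H →ₗ[ℂ] ℂ) (hm : m.IsAlt)
    (X : Module.Basis (Fin g ⊕ Fin g) ℂ H)
    (hX1 : ∀ i j, m (X (inl i)) (X (inr j)) = if i = j then 1 else 0)
    (hX2 : ∀ i j, m (X (inl i)) (X (inl j)) = 0)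
    (hX3 : ∀ i j, m (X (inr i)) (X (inr j)) = 0)
    (ι : ⋀[ℂ]^3 H →ₗ[ℂ] H ⊗[ℂ] (H ⊗[ℂ] H))
    (hι : ∀ v : Fin 3 → H, ι (wedge3 v) =
      ∑ σ : Equiv.Perm (Fin 3),
        (Equiv.Perm.sign σ : ℤ) • (v (σ 0) ⊗ₜ[ℂ] (v (σ 1) ⊗ₜ[ℂ] v (σ 2))))
    (Mhat : (H ⊗[ℂ] (H ⊗[ℂ] H)) ⊗[ℂ] (H ⊗[ℂ] (H ⊗[ℂ] H)) →ₗ[ℂ] ℂ)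
    (hMhat : ∀ Z1 Z2 Z3 W1 W2 W3 : H,
      Mhat ((Z1 ⊗ₜ[ℂ] (Z2 ⊗ₜ[ℂ] Z3)) ⊗ₜ[ℂ] (W1 ⊗ₜ[ℂ] (W2 ⊗ₜ[ℂ] W3)))
        = m Z1 W1 * m Z2 W2 * m Z3 W3)
    (a b c W : H) :
    Mhat (ι (wedge3 ![a, b, c]) ⊗ₜ ι (∑ i, wedge3 ![W, X (inl i), X (inr i)])) =
      6 * m (tripleContraction m a b c) W := by
  set P : H → H → Fin g → ℂ := fun x y i =>
    m x (X (inl i)) * m y (X (inr i)) - m x (X (inr i)) * m y (X (inl i))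
  have hP : ∀ x y, ∑ i, P x y i = m x y :=
    sum_symplecticBasis_mul_sub_mul m hm X hX1 hX2 hX3
  -- Laplace expansion of the determinant along the column of `W`
  have hexpand : ∀ i, Mhat (ι (wedge3 ![a, b, c]) ⊗ₜ ι (wedge3 ![W, X (inl i), X (inr i)])) =
      6 * m a W * P b c i - 6 * m b W * P a c i + 6 * m c W * P a b i := fun i => by
    rw [Mhat_iota_wedge3_tmul m ι hι Mhat hMhat, Matrix.det_fin_three_of]
    ring
  simp only [map_sum, tmul_sum, hexpand, Finset.sum_add_distrib, Finset.sum_sub_distrib,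
    ← Finset.mul_sum, hP, tripleContraction, map_add, map_smul, LinearMap.add_apply,
    LinearMap.smul_apply, smul_eq_mul, ← hm.neg c a]
  ring

theorem Mhat_iota_wedgeI_tmul_wedge3 (m : H →ₗ[ℂ] H →ₗ[ℂ] ℂ) (hm : m.IsAlt)
    (X : Module.Basis (Fin g ⊕ Fin g) ℂ H)
    (hX1 : ∀ i j, m (X (inl i)) (X (inr j)) = if i = j then 1 else 0)
    (hX2 : ∀ i j, m (X (inl i)) (X (inl j)) = 0)
    (hX3 : ∀ i j, m (X (inr i)) (X (inr j)) = 0)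
    (ι : ⋀[ℂ]^3 H →ₗ[ℂ] H ⊗[ℂ] (H ⊗[ℂ] H))
    (hι : ∀ v : Fin 3 → H, ι (wedge3 v) =
      ∑ σ : Equiv.Perm (Fin 3),
        (Equiv.Perm.sign σ : ℤ) • (v (σ 0) ⊗ₜ[ℂ] (v (σ 1) ⊗ₜ[ℂ] v (σ 2))))
    (Mhat : (H ⊗[ℂ] (H ⊗[ℂ] H)) ⊗[ℂ] (H ⊗[ℂ] (H ⊗[ℂ] H)) →ₗ[ℂ] ℂ)
    (hMhat : ∀ Z1 Z2 Z3 W1 W2 W3 : H,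
      Mhat ((Z1 ⊗ₜ[ℂ] (Z2 ⊗ₜ[ℂ] Z3)) ⊗ₜ[ℂ] (W1 ⊗ₜ[ℂ] (W2 ⊗ₜ[ℂ] W3)))
        = m Z1 W1 * m Z2 W2 * m Z3 W3)
    (Z d e f : H) :
    Mhat (ι (∑ i, wedge3 ![Z, X (inl i), X (inr i)]) ⊗ₜ ι (wedge3 ![d, e, f])) =
      6 * m Z (tripleContraction m d e f) := by
  rw [map_sum, sum_tmul, map_sum, Finset.sum_congr rfl fun i _ =>
      Mhat_iota_wedge3_tmul_comm m hm ι hι Mhat hMhat _ _ _ d e f, Finset.sum_neg_distrib,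
    ← map_sum, ← tmul_sum, ← map_sum,
    Mhat_iota_wedge3_tmul_wedgeI m hm X hX1 hX2 hX3 ι hι Mhat hMhat, ← hm.neg]
  ring

theorem Mhat_iota_wedgeI_tmul_wedgeI (m : H →ₗ[ℂ] H →ₗ[ℂ] ℂ) (hm : m.IsAlt)
    (X : Module.Basis (Fin g ⊕ Fin g) ℂ H)
    (hX1 : ∀ i j, m (X (inl i)) (X (inr j)) = if i = j then 1 else 0)
    (hX2 : ∀ i j, m (X (inl i)) (X (inl j)) = 0)
    (hX3 : ∀ i j, m (X (inr i)) (X (inr j)) = 0)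
    (ι : ⋀[ℂ]^3 H →ₗ[ℂ] H ⊗[ℂ] (H ⊗[ℂ] H))
    (hι : ∀ v : Fin 3 → H, ι (wedge3 v) =
      ∑ σ : Equiv.Perm (Fin 3),
        (Equiv.Perm.sign σ : ℤ) • (v (σ 0) ⊗ₜ[ℂ] (v (σ 1) ⊗ₜ[ℂ] v (σ 2))))
    (Mhat : (H ⊗[ℂ] (H ⊗[ℂ] H)) ⊗[ℂ] (H ⊗[ℂ] (H ⊗[ℂ] H)) →ₗ[ℂ] ℂ)
    (hMhat : ∀ Z1 Z2 Z3 W1 W2 W3 : H,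
      Mhat ((Z1 ⊗ₜ[ℂ] (Z2 ⊗ₜ[ℂ] Z3)) ⊗ₜ[ℂ] (W1 ⊗ₜ[ℂ] (W2 ⊗ₜ[ℂ] W3)))
        = m Z1 W1 * m Z2 W2 * m Z3 W3)
    (Z W : H) :
    Mhat (ι (∑ i, wedge3 ![Z, X (inl i), X (inr i)]) ⊗ₜ
        ι (∑ i, wedge3 ![W, X (inl i), X (inr i)])) =
      6 * ((g : ℂ) - 1) * m Z W := by
  have hterm : ∀ i, Mhat (ι (wedge3 ![Z, X (inl i), X (inr i)]) ⊗ₜ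
      ι (∑ i, wedge3 ![W, X (inl i), X (inr i)])) =
      6 * m Z W + 6 * (m W (X (inl i)) * m Z (X (inr i)) - m W (X (inr i)) * m Z (X (inl i))) :=
    fun i => by
      rw [Mhat_iota_wedge3_tmul_wedgeI m hm X hX1 hX2 hX3 ι hι Mhat hMhat]
      simp only [tripleContraction, map_add, map_smul, LinearMap.add_apply, LinearMap.smul_apply,
        smul_eq_mul, hX1, if_pos, ← hm.neg (X (inr i)) Z, ← hm.neg (X (inl i)) W,
        ← hm.neg (X (inr i)) W]
      ring
  rw [map_sum ι, sum_tmul, map_sum, Finset.sum_congr rfl fun i _ => hterm i]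
  simp only [Finset.sum_add_distrib, ← Finset.mul_sum,
    sum_symplecticBasis_mul_sub_mul m hm X hX1 hX2 hX3, Finset.sum_const, Finset.card_univ,
    Fintype.card_fin, nsmul_eq_mul, ← hm.neg W Z]
  ring

end IntersectionElement

/-- Lemma 5.2 of the paper: assume `g ≥ 2`.  For all decomposable
`z = Z₁ ∧ Z₂ ∧ Z₃` and `w = W₁ ∧ W₂ ∧ W₃` in `⋀³H`, with `z^H := q_H(p_H(z))` and
`w^H := q_H(p_H(w))`, one has `M̂(ι(z − z^H) ⊗ ι(w − w^H)) = M₂(z ⊗ w) − (3/(2g−2)) M₁(z ⊗ w)`,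
where `M₁(z ⊗ w) = (m ⊗ m ⊗ m)(ι(z) ⊗ ι(w))` and `M₂(z ⊗ w) = M̂(ι(z) ⊗ ι(w))`. -/
theorem stmt11 {H : Type*} [AddCommGroup H] [Module ℂ H] {g : ℕ} (hg : 2 ≤ g)
    (m : H →ₗ[ℂ] H →ₗ[ℂ] ℂ) (halt : ∀ x : H, m x x = 0)
    (X : Module.Basis (Fin g ⊕ Fin g) ℂ H)
    (hX1 : ∀ i j, m (X (Sum.inl i)) (X (Sum.inr j)) = if i = j then 1 else 0)
    (hX2 : ∀ i j, m (X (Sum.inl i)) (X (Sum.inl j)) = 0)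
    (hX3 : ∀ i j, m (X (Sum.inr i)) (X (Sum.inr j)) = 0)
    -- `(m ⊗ id_H) : H^{⊗3} → H`, contraction of the first two tensor factors by `m`
    (c12 : H ⊗[ℂ] (H ⊗[ℂ] H) →ₗ[ℂ] H)
    (hc12 : ∀ Z1 Z2 Z3 : H, c12 (Z1 ⊗ₜ[ℂ] (Z2 ⊗ₜ[ℂ] Z3)) = m Z1 Z2 • Z3)
    -- the embedding `ι : ⋀³H → H^{⊗3}`
    (ι : ⋀[ℂ]^3 H →ₗ[ℂ] H ⊗[ℂ] (H ⊗[ℂ] H))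
    (hι : ∀ v : Fin 3 → H, ι (wedge3 v) =
      ∑ σ : Equiv.Perm (Fin 3),
        (Equiv.Perm.sign σ : ℤ) • (v (σ 0) ⊗ₜ[ℂ] (v (σ 1) ⊗ₜ[ℂ] v (σ 2))))
    -- the linear map `M̂ : H^{⊗6} → ℂ` with `M̂(Z₁⊗Z₂⊗Z₃⊗W₁⊗W₂⊗W₃) = (Z₁·W₁)(Z₂·W₂)(Z₃·W₃)`
    (Mhat : (H ⊗[ℂ] (H ⊗[ℂ] H)) ⊗[ℂ] (H ⊗[ℂ] (H ⊗[ℂ] H)) →ₗ[ℂ] ℂ)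
    (hMhat : ∀ Z1 Z2 Z3 W1 W2 W3 : H,
      Mhat ((Z1 ⊗ₜ[ℂ] (Z2 ⊗ₜ[ℂ] Z3)) ⊗ₜ[ℂ] (W1 ⊗ₜ[ℂ] (W2 ⊗ₜ[ℂ] W3)))
        = m Z1 W1 * m Z2 W2 * m Z3 W3)
    -- the linear map `m ⊗ m ⊗ m : H^{⊗6} → ℂ` with
    -- `(m ⊗ m ⊗ m)(v₁ ⊗ ⋯ ⊗ v₆) = (v₁·v₂)(v₃·v₄)(v₅·v₆)`, so that
    -- `M₁(z ⊗ w) = (m ⊗ m ⊗ m)(ι(z) ⊗ ι(w))`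
    (mmm : (H ⊗[ℂ] (H ⊗[ℂ] H)) ⊗[ℂ] (H ⊗[ℂ] (H ⊗[ℂ] H)) →ₗ[ℂ] ℂ)
    (hmmm : ∀ v1 v2 v3 v4 v5 v6 : H,
      mmm ((v1 ⊗ₜ[ℂ] (v2 ⊗ₜ[ℂ] v3)) ⊗ₜ[ℂ] (v4 ⊗ₜ[ℂ] (v5 ⊗ₜ[ℂ] v6)))
        = m v1 v2 * m v3 v4 * m v5 v6)
    -- `q_H : H → ⋀³H`, `q_H(Z) = Z ∧ I = Σᵢ Z ∧ Xᵢ ∧ X_{g+i}`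
    (qH : H → ⋀[ℂ]^3 H)
    (hqH : ∀ Z : H, qH Z = ∑ i : Fin g, wedge3 ![Z, X (Sum.inl i), X (Sum.inr i)])
    -- `p_H : ⋀³H → H`, `p_H(z) = (1/(2g−2)) (m ⊗ id_H)(ι(z))`
    (pH : ⋀[ℂ]^3 H → H)
    (hpH : ∀ z : ⋀[ℂ]^3 H, pH z = (1 / (2 * (g : ℂ) - 2)) • c12 (ι z))
    (Z1 Z2 Z3 W1 W2 W3 : H) :
    Mhat (ι (wedge3 ![Z1, Z2, Z3] - qH (pH (wedge3 ![Z1, Z2, Z3])))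
        ⊗ₜ[ℂ] ι (wedge3 ![W1, W2, W3] - qH (pH (wedge3 ![W1, W2, W3]))))
      = Mhat (ι (wedge3 ![Z1, Z2, Z3]) ⊗ₜ[ℂ] ι (wedge3 ![W1, W2, W3]))
        - (3 / (2 * (g : ℂ) - 2)) * mmm (ι (wedge3 ![Z1, Z2, Z3]) ⊗ₜ[ℂ] ι (wedge3 ![W1, W2, W3])) := by
  have hg1 : (g : ℂ) - 1 ≠ 0 := sub_ne_zero.2 (by exact_mod_cast (by omega : g ≠ 1))
  have hpH_wedge3 : ∀ a b c : H, pH (wedge3 ![a, b, c]) =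
      ((g : ℂ) - 1)⁻¹ • tripleContraction m a b c := fun a b c => by
    rw [hpH, contract_iota_wedge3 m halt c12 hc12 ι hι, smul_smul]
    congr 1
    field_simp
  simp only [hpH_wedge3, hqH, map_sub, tmul_sub, sub_tmul, map_smul, LinearMap.smul_apply,
    smul_eq_mul,
    Mhat_iota_wedge3_tmul_wedgeI m halt X hX1 hX2 hX3 ι hι Mhat hMhat,
    Mhat_iota_wedgeI_tmul_wedge3 m halt X hX1 hX2 hX3 ι hι Mhat hMhat,
    Mhat_iota_wedgeI_tmul_wedgeI m halt X hX1 hX2 hX3 ι hι Mhat hMhat,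
    mmm_iota_wedge3_tmul m halt ι hι mmm hmmm]
  field_simp
  ring
end
end
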